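/- arXiv:2211.02920 — 3 statements merged into one kernel-verified Lean document; each statement's English description precedes it below -/
import Mathlib

section
/- Let S = D Dᵀ be the Gram matrix of a d₁×d₂ data matrix D, and suppose Ψ₁, Ψ₂ are symmetric positive definite matrices satisfying the stationarity equation S = tr_{d₁}[(Ψ₁ ⊕ Ψ₂)^{-1}] (where tr_{d₁} forms the d₁×d₁ matrix of traces of d₂×d₂ blocks). If V₁ diagonalizes Ψ₁ and V₂ diagonalizes Ψ₂ (orthogonally), then V₁ also orthogonally diagonalizes S; i.e., S and Ψ₁ share eigenvectors. -/
/-!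
Conjugating by the orthogonal matrix `W = V₁ ⊗ V₂` diagonalizes the Kronecker sum:
`Ψ₁ ⊕ Ψ₂ = W (Λ₁ ⊕ Λ₂) Wᵀ`, hence `(Ψ₁ ⊕ Ψ₂)⁻¹ = W (Λ₁ ⊕ Λ₂)⁻¹ Wᵀ` with a diagonal middle factor.
The blockwise trace turns conjugation by `V₁ ⊗ V₂` into conjugation by `V₁`, because the
columns of `V₂` are orthonormal, and it sends diagonal matrices to diagonal matrices.
-/

open Matrix
open scoped Kronecker

/-- The blockwise trace `tr_b : M_{mb}(ℝ) → M_b(ℝ)`, `(tr_b M)_{ij} = tr(M (J^{ij} ⊗ I_m))`. -/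
def blockTrace {b m : ℕ} (M : Matrix (Fin b × Fin m) (Fin b × Fin m) ℝ) :
    Matrix (Fin b) (Fin b) ℝ :=
  fun i j => (M * (single i j (1 : ℝ) ⊗ₖ (1 : Matrix (Fin m) (Fin m) ℝ))).trace

namespace Matrix

variable {n α : Type*} [Fintype n] [DecidableEq n]

theorem IsDiag.inv [CommRing α] {A : Matrix n n α} (hA : A.IsDiag) : A⁻¹.IsDiag := by
  rw [← hA.diagonal_diag, inv_diagonal]
  exact isDiag_diagonal _

theorem inv_conj_of_transpose_mul_self [CommRing α] {W : Matrix n n α} (hW : Wᵀ * W = 1)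
    (N : Matrix n n α) : (W * N * Wᵀ)⁻¹ = W * N⁻¹ * Wᵀ := by
  have hWinv : W⁻¹ = Wᵀ := inv_eq_left_inv hW
  rw [mul_inv_rev, mul_inv_rev, ← transpose_nonsing_inv, hWinv, transpose_transpose,
    Matrix.mul_assoc]

theorem kroneckerSum_eq_conj {m : Type*} [Fintype m] [DecidableEq m] [CommRing α]
    {Ψ₁ V₁ Λ₁ : Matrix m m α} {Ψ₂ V₂ Λ₂ : Matrix n n α}
    (hV₁ : V₁ * V₁ᵀ = 1) (hV₂ : V₂ * V₂ᵀ = 1)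
    (hdec₁ : Ψ₁ = V₁ * Λ₁ * V₁ᵀ) (hdec₂ : Ψ₂ = V₂ * Λ₂ * V₂ᵀ) :
    Ψ₁ ⊗ₖ (1 : Matrix n n α) + (1 : Matrix m m α) ⊗ₖ Ψ₂
      = (V₁ ⊗ₖ V₂) * (Λ₁ ⊗ₖ 1 + 1 ⊗ₖ Λ₂) * (V₁ ⊗ₖ V₂)ᵀ := by
  rw [← kroneckerMap_transpose, Matrix.mul_add, Matrix.add_mul, ← mul_kronecker_mul,
    ← mul_kronecker_mul, ← mul_kronecker_mul, ← mul_kronecker_mul, mul_one, mul_one, hV₁, hV₂,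
    ← hdec₁, ← hdec₂]

end Matrix

theorem blockTrace_apply {b m : ℕ} (M : Matrix (Fin b × Fin m) (Fin b × Fin m) ℝ)
    (i j : Fin b) : blockTrace M i j = ∑ k, M (j, k) (i, k) := by
  simp [blockTrace, trace, Matrix.mul_apply, kroneckerMap_apply, single_apply, one_apply,
    Fintype.sum_prod_type, ite_and]

theorem Matrix.IsDiag.blockTrace {b m : ℕ} {M : Matrix (Fin b × Fin m) (Fin b × Fin m) ℝ}
    (hM : M.IsDiag) : (_root_.blockTrace M).IsDiag := fun i j hij => by
  show _root_.blockTrace M i j = 0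
  rw [blockTrace_apply]
  exact Finset.sum_eq_zero fun k _ => hM fun h => hij (Prod.ext_iff.1 h).1.symm

theorem blockTrace_kronecker_conj {b m : ℕ} (A : Matrix (Fin b) (Fin b) ℝ)
    {U : Matrix (Fin m) (Fin m) ℝ} (hU : Uᵀ * U = 1)
    (M : Matrix (Fin b × Fin m) (Fin b × Fin m) ℝ) :
    blockTrace ((A ⊗ₖ U) * M * (A ⊗ₖ U)ᵀ) = A * blockTrace M * Aᵀ := by
  have hU' : ∀ q r, ∑ k, U k q * U k r = if q = r then 1 else 0 := fun q r => by
    simpa [Matrix.mul_apply, one_apply] using congrFun (congrFun hU q) r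
  ext i j
  simp only [blockTrace_apply, Matrix.mul_apply, transpose_apply, kroneckerMap_apply,
    Fintype.sum_prod_type, Finset.sum_mul, Finset.mul_sum]
  calc _ = ∑ a, ∑ r, ∑ c, ∑ q, A j c * M (c, q) (a, r) * A i a * ∑ k, U k q * U k r := by
        rw [Finset.sum_comm]; refine Finset.sum_congr rfl fun a _ => ?_
        rw [Finset.sum_comm]; refine Finset.sum_congr rfl fun r _ => ?_
        rw [Finset.sum_comm]; refine Finset.sum_congr rfl fun c _ => ?_
        rw [Finset.sum_comm]; refine Finset.sum_congr rfl fun q _ => ?_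
        rw [Finset.mul_sum]; exact Finset.sum_congr rfl fun k _ => by ring
    _ = ∑ a, ∑ c, ∑ q, A j c * M (c, q) (a, q) * A i a := by
        simp only [hU', mul_ite, mul_one, mul_zero, Finset.sum_ite_eq', Finset.mem_univ, if_true]
        exact Finset.sum_congr rfl fun a _ => Finset.sum_comm
    _ = _ := by
        rw [Finset.sum_comm]
        exact Finset.sum_congr rfl fun c _ => Finset.sum_congr rfl fun a _ =>
          Finset.sum_congr rfl fun q _ => by ring

theorem gram_shares_eigenvectors_general (d₁ d₂ : ℕ)
    (D : Matrix (Fin d₁) (Fin d₂) ℝ)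
    (Ψ₁ V₁ Λ₁ : Matrix (Fin d₁) (Fin d₁) ℝ)
    (Ψ₂ V₂ Λ₂ : Matrix (Fin d₂) (Fin d₂) ℝ)
    (hV₁' : V₁ᵀ * V₁ = 1)
    (hV₂' : V₂ᵀ * V₂ = 1)
    (hΛ₁ : Λ₁.IsDiag) (hΛ₂ : Λ₂.IsDiag)
    (hdec₁ : Ψ₁ = V₁ * Λ₁ * V₁ᵀ) (hdec₂ : Ψ₂ = V₂ * Λ₂ * V₂ᵀ)
    (hstat : D * Dᵀ = blockTrace
      ((Ψ₁ ⊗ₖ (1 : Matrix (Fin d₂) (Fin d₂) ℝ)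
        + (1 : Matrix (Fin d₁) (Fin d₁) ℝ) ⊗ₖ Ψ₂)⁻¹)) :
    ∃ E : Matrix (Fin d₁) (Fin d₁) ℝ, E.IsDiag ∧ D * Dᵀ = V₁ * E * V₁ᵀ := by
  have hW : (V₁ ⊗ₖ V₂)ᵀ * (V₁ ⊗ₖ V₂) = 1 := by
    rw [← kroneckerMap_transpose, ← mul_kronecker_mul, hV₁', hV₂', one_kronecker_one]
  rw [hstat, kroneckerSum_eq_conj (mul_eq_one_comm.1 hV₁') (mul_eq_one_comm.1 hV₂') hdec₁ hdec₂,
    inv_conj_of_transpose_mul_self hW, blockTrace_kronecker_conj V₁ hV₂']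
  exact ⟨_, ((hΛ₁.kronecker isDiag_one).add (isDiag_one.kronecker hΛ₂)).inv.blockTrace, rfl⟩

/-- If `S = D Dᵀ` satisfies the stationarity equation `S = tr_{d₁}[(Ψ₁ ⊕ Ψ₂)⁻¹]`
for symmetric positive definite `Ψ₁ = V₁Λ₁V₁ᵀ`, `Ψ₂ = V₂Λ₂V₂ᵀ` with `V₁, V₂`
orthogonal and `Λ₁, Λ₂` diagonal, then `V₁` also orthogonally diagonalizes `S`. -/
theorem gram_shares_eigenvectors (d₁ d₂ : ℕ)
    (D : Matrix (Fin d₁) (Fin d₂) ℝ)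
    (Ψ₁ V₁ Λ₁ : Matrix (Fin d₁) (Fin d₁) ℝ)
    (Ψ₂ V₂ Λ₂ : Matrix (Fin d₂) (Fin d₂) ℝ)
    (hΨ₁ : Ψ₁.PosDef) (hΨ₂ : Ψ₂.PosDef)
    (hV₁ : V₁ * V₁ᵀ = 1) (hV₁' : V₁ᵀ * V₁ = 1)
    (hV₂ : V₂ * V₂ᵀ = 1) (hV₂' : V₂ᵀ * V₂ = 1)
    (hΛ₁ : Λ₁.IsDiag) (hΛ₂ : Λ₂.IsDiag)
    (hdec₁ : Ψ₁ = V₁ * Λ₁ * V₁ᵀ) (hdec₂ : Ψ₂ = V₂ * Λ₂ * V₂ᵀ)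
    (hstat : D * Dᵀ = blockTrace
      ((Ψ₁ ⊗ₖ (1 : Matrix (Fin d₂) (Fin d₂) ℝ)
        + (1 : Matrix (Fin d₁) (Fin d₁) ℝ) ⊗ₖ Ψ₂)⁻¹)) :
    ∃ E : Matrix (Fin d₁) (Fin d₁) ℝ, E.IsDiag ∧ D * Dᵀ = V₁ * E * V₁ᵀ :=
  gram_shares_eigenvectors_general d₁ d₂ D Ψ₁ V₁ Λ₁ Ψ₂ V₂ Λ₂ hV₁' hV₂' hΛ₁ hΛ₂ hdec₁ hdec₂ hstat
end

section
/- det(A ⊕ B) = ∏_{i,j} (λ_i + μ_j), where λ_i are the eigenvalues of the symmetric matrix A and μ_j the eigenvalues of the symmetric matrix B, and A ⊕ B = A ⊗ I_b + I_a ⊗ B. -/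
/-!
Writing `A = U D U'` and `B = V E V'` with `U U' = 1`, `V V' = 1` and `D`, `E` diagonal, the
Kronecker sum `A ⊗ I + I ⊗ B` is conjugate by `U ⊗ V` to the diagonal matrix with entries
`D i i + E j j`, so its determinant is the product of these entries.
-/

open Matrix
open scoped Kronecker

namespace Matrix

variable {R m n : Type*} [CommRing R] [DecidableEq m] [DecidableEq n]

def kroneckerSum (A : Matrix m m R) (B : Matrix n n R) : Matrix (m × n) (m × n) R :=
  A ⊗ₖ 1 + 1 ⊗ₖ B

theorem kroneckerSum_diagonal (d : m → R) (e : n → R) :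
    kroneckerSum (diagonal d) (diagonal e) = diagonal fun p => d p.1 + e p.2 := by
  rw [kroneckerSum, ← diagonal_one, ← diagonal_one, diagonal_kronecker_diagonal,
    diagonal_kronecker_diagonal, diagonal_add]
  simp

variable [Fintype m] [Fintype n]

theorem kroneckerSum_conj {U U' : Matrix m m R} {V V' : Matrix n n R}
    (hU : U * U' = 1) (hV : V * V' = 1) (A : Matrix m m R) (B : Matrix n n R) :
    kroneckerSum (U * A * U') (V * B * V') = (U ⊗ₖ V) * kroneckerSum A B * (U' ⊗ₖ V') := by
  have h1U : (1 : Matrix m m R) = U * 1 * U' := by rw [mul_one, hU]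
  have h1V : (1 : Matrix n n R) = V * 1 * V' := by rw [mul_one, hV]
  rw [kroneckerSum, kroneckerSum, mul_add, add_mul, ← mul_kronecker_mul, ← mul_kronecker_mul,
    ← mul_kronecker_mul, ← mul_kronecker_mul, ← h1U, ← h1V]

theorem det_kroneckerSum_conj {U U' : Matrix m m R} {V V' : Matrix n n R}
    (hU : U * U' = 1) (hV : V * V' = 1) (A : Matrix m m R) (B : Matrix n n R) :
    (kroneckerSum (U * A * U') (V * B * V')).det = (kroneckerSum A B).det := by
  rw [kroneckerSum_conj hU hV, det_mul_right_comm, ← mul_kronecker_mul, hU, hV,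
    one_kronecker_one, one_mul]

theorem det_kroneckerSum_conj_diagonal {U U' : Matrix m m R} {V V' : Matrix n n R}
    (hU : U * U' = 1) (hV : V * V' = 1) (d : m → R) (e : n → R) :
    (kroneckerSum (U * diagonal d * U') (V * diagonal e * V')).det = ∏ i, ∏ j, (d i + e j) := by
  rw [det_kroneckerSum_conj hU hV, kroneckerSum_diagonal, det_diagonal, Fintype.prod_prod_type]

theorem IsHermitian.eq_eigenvectorUnitary_mul_diagonal_mul_star {A : Matrix n n ℝ}
    (hA : A.IsHermitian) :
    A = (hA.eigenvectorUnitary : Matrix n n ℝ) * diagonal hA.eigenvalues *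
      star (hA.eigenvectorUnitary : Matrix n n ℝ) := by
  simpa using hA.spectral_theorem

end Matrix

/-- `det(A ⊕ B) = ∏_{i,j} (λ_i + μ_j)` where `λ_i`, `μ_j` are the eigenvalues of
the real symmetric matrices `A` and `B`. -/
theorem det_kroneckerSum (a b : ℕ)
    (A : Matrix (Fin a) (Fin a) ℝ) (B : Matrix (Fin b) (Fin b) ℝ)
    (hA : A.IsHermitian) (hB : B.IsHermitian) :
    (A ⊗ₖ (1 : Matrix (Fin b) (Fin b) ℝ)
      + (1 : Matrix (Fin a) (Fin a) ℝ) ⊗ₖ B).det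
    = ∏ i : Fin a, ∏ j : Fin b, (hA.eigenvalues i + hB.eigenvalues j) := by
  change (kroneckerSum A B).det = _
  conv_lhs => rw [hA.eq_eigenvectorUnitary_mul_diagonal_mul_star,
    hB.eq_eigenvectorUnitary_mul_diagonal_mul_star]
  exact det_kroneckerSum_conj_diagonal (mem_unitaryGroup_iff.mp hA.eigenvectorUnitary.2)
    (mem_unitaryGroup_iff.mp hB.eigenvectorUnitary.2) _ _
end

section
/- For a convex differentiable function f on symmetric matrices whose gradient at Ψ is S − F(Ψ), augmented by an L1 penalty ρ‖Ψ‖₁ (entrywise), the subgradient optimality (KKT) conditions at a point Ψ̂ are: |S_{ij} − F(Ψ̂)_{ij}| ≤ ρ when Ψ̂_{ij} = 0, F(Ψ̂)_{ij} = S_{ij} + ρ when Ψ̂_{ij} > 0, and F(Ψ̂)_{ij} = S_{ij} − ρ when Ψ̂_{ij} < 0. Prove that if additionally F preserves block-diagonal structure (F(Ψ) is block-diagonal with respect to any partition making Ψ block-diagonal), and Ψ̂ satisfying the KKT conditions is block-diagonal with respect to a partition π, then every entry of S off the block diagonal of π has magnitude at most ρ. -/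
/-!
Off the diagonal blocks `Ψ̂` vanishes, hence so does `F Ψ̂`, and the KKT condition at a zero
entry, `|S i j - F Ψ̂ i j| ≤ ρ`, becomes `|S i j| ≤ ρ`.
-/

section

variable {ι R : Type*} [Zero R]

def IsBlockDiagonalWrt {γ : Type*} (g : ι → γ) (Ψ : Matrix ι ι R) : Prop :=
  ∀ i j, g i ≠ g j → Ψ i j = 0

theorem preimage_singleton_apply_eq_iff {γ : Type*} (g : ι → γ) (a b : ι) :
    g ⁻¹' {g a} = g ⁻¹' {g b} ↔ g a = g b :=
  ⟨fun h => (h ▸ rfl : a ∈ g ⁻¹' {g b}), fun h => by rw [h]⟩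

theorem isBlockDiagonalWrt_fibres_iff {γ : Type*} (g : ι → γ) (Ψ : Matrix ι ι R) :
    IsBlockDiagonalWrt (fun i => g ⁻¹' {g i}) Ψ ↔ IsBlockDiagonalWrt g Ψ := by
  simp only [IsBlockDiagonalWrt, ne_eq, preimage_singleton_apply_eq_iff]

/-- Relabelling the blocks by the fibres of `g`, which live in `Type`, brings a labelling in
any universe within reach of `hF`. -/
theorem IsBlockDiagonalWrt.map_of_forall_type {ι : Type} {F : Matrix ι ι R → Matrix ι ι R}
    (hF : ∀ {γ' : Type} (g' : ι → γ') (Ψ : Matrix ι ι R),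
      IsBlockDiagonalWrt g' Ψ → IsBlockDiagonalWrt g' (F Ψ))
    {γ : Type*} {g : ι → γ} {Ψ : Matrix ι ι R} (hΨ : IsBlockDiagonalWrt g Ψ) :
    IsBlockDiagonalWrt g (F Ψ) :=
  (isBlockDiagonalWrt_fibres_iff g _).mp <|
    hF _ Ψ ((isBlockDiagonalWrt_fibres_iff g Ψ).mpr hΨ)

end

theorem kkt_offdiag_small_general (n : ℕ) {γ : Type*} (g : Fin n → γ)
    (S : Matrix (Fin n) (Fin n) ℝ) (ρ : ℝ)
    (F : Matrix (Fin n) (Fin n) ℝ → Matrix (Fin n) (Fin n) ℝ)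
    (hFblock : ∀ {γ' : Type} (g' : Fin n → γ') (Ψ : Matrix (Fin n) (Fin n) ℝ),
      (∀ i j : Fin n, g' i ≠ g' j → Ψ i j = 0) →
      ∀ i j : Fin n, g' i ≠ g' j → F Ψ i j = 0)
    (Ψhat : Matrix (Fin n) (Fin n) ℝ)
    (hKKT0 : ∀ i j : Fin n, Ψhat i j = 0 → |S i j - F Ψhat i j| ≤ ρ)
    (hΨblock : ∀ i j : Fin n, g i ≠ g j → Ψhat i j = 0) :
    ∀ i j : Fin n, g i ≠ g j → |S i j| ≤ ρ := by
  intro i j hij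
  have hF : F Ψhat i j = 0 :=
    IsBlockDiagonalWrt.map_of_forall_type @hFblock (g := g) hΨblock i j hij
  simpa only [hF, sub_zero] using hKKT0 i j (hΨblock i j hij)

/-- KKT conditions for the L1-penalized problem: if `F` preserves block-diagonal
structure and `Ψ̂` satisfying the KKT conditions is block-diagonal with respect
to a partition, then every entry of `S` off the block diagonal has magnitude at
most `ρ`. -/
theorem kkt_offdiag_small (n : ℕ) {γ : Type*} (g : Fin n → γ)
    (S : Matrix (Fin n) (Fin n) ℝ) (hS : S.IsSymm) (ρ : ℝ) (hρ : 0 < ρ)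
    (F : Matrix (Fin n) (Fin n) ℝ → Matrix (Fin n) (Fin n) ℝ)
    (hFsymm : ∀ Ψ : Matrix (Fin n) (Fin n) ℝ, Ψ.IsSymm → (F Ψ).IsSymm)
    (hFblock : ∀ {γ' : Type} (g' : Fin n → γ') (Ψ : Matrix (Fin n) (Fin n) ℝ),
      (∀ i j : Fin n, g' i ≠ g' j → Ψ i j = 0) →
      ∀ i j : Fin n, g' i ≠ g' j → F Ψ i j = 0)
    (Ψhat : Matrix (Fin n) (Fin n) ℝ) (hΨsymm : Ψhat.IsSymm)
    (hKKT0 : ∀ i j : Fin n, Ψhat i j = 0 → |S i j - F Ψhat i j| ≤ ρ)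
    (hKKTpos : ∀ i j : Fin n, 0 < Ψhat i j → F Ψhat i j = S i j + ρ)
    (hKKTneg : ∀ i j : Fin n, Ψhat i j < 0 → F Ψhat i j = S i j - ρ)
    (hΨblock : ∀ i j : Fin n, g i ≠ g j → Ψhat i j = 0) :
    ∀ i j : Fin n, g i ≠ g j → |S i j| ≤ ρ :=
  kkt_offdiag_small_general n g S ρ F hFblock Ψhat hKKT0 hΨblock
end
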